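/- arXiv:0912.1251 — 2 statements merged into one kernel-verified Lean document; each statement's English description precedes it below -/
import Mathlib

section
/- Let A be a Hermitian n×n complex matrix and B a Hermitian n×n complex matrix. Then the function f(h) = log Tr exp(A + h B) is convex in h ∈ ℝ. -/
/-!
Diagonalise `Z = a • X + b • Y` by a unitary `W`. The eigenvalues of `Z` are `a αᵢ + b βᵢ`, where
`α` and `β` are the diagonals of `Wᴴ X W` and `Wᴴ Y W`, so Hölder's inequality gives
`Tr e^Z = ∑ (e^αᵢ)^a (e^βᵢ)^b ≤ (∑ e^αᵢ)^a (∑ e^βᵢ)^b`. By Peierls' inequality `∑ e^αᵢ ≤ Tr e^X`: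
the diagonal of `Wᴴ X W` is the image of the spectrum of `X` under the doubly stochastic matrix
`|(Wᴴ V)ᵢⱼ|²` (`V` diagonalising `X`), and `exp` is convex. Hence `log Tr exp` is convex on
Hermitian matrices, and `h ↦ A + h B` is affine.
-/

open Matrix

theorem Real.sum_rpow_mul_rpow_le_of_add_eq_one {ι : Type*} (s : Finset ι) {f g : ι → ℝ}
    (hf : ∀ i ∈ s, 0 ≤ f i) (hg : ∀ i ∈ s, 0 ≤ g i) (hfs : 0 < ∑ i ∈ s, f i)
    (hgs : 0 < ∑ i ∈ s, g i) {a b : ℝ} (ha : 0 ≤ a) (hb : 0 ≤ b) (hab : a + b = 1) :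
    ∑ i ∈ s, f i ^ a * g i ^ b ≤ (∑ i ∈ s, f i) ^ a * (∑ i ∈ s, g i) ^ b := by
  set S := ∑ i ∈ s, f i
  set T := ∑ i ∈ s, g i
  calc ∑ i ∈ s, f i ^ a * g i ^ b
      = S ^ a * T ^ b * ∑ i ∈ s, (f i / S) ^ a * (g i / T) ^ b := by
        rw [Finset.mul_sum]
        refine Finset.sum_congr rfl fun i hi => ?_
        rw [Real.div_rpow (hf i hi) hfs.le, Real.div_rpow (hg i hi) hgs.le]
        field_simp
    _ ≤ S ^ a * T ^ b * ∑ i ∈ s, (a * (f i / S) + b * (g i / T)) := by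
        gcongr with i hi
        exact Real.geom_mean_le_arith_mean2_weighted ha hb
          (div_nonneg (hf i hi) hfs.le) (div_nonneg (hg i hi) hgs.le) hab
    _ = S ^ a * T ^ b := by
        rw [Finset.sum_add_distrib, ← Finset.mul_sum, ← Finset.mul_sum, ← Finset.sum_div,
          ← Finset.sum_div, div_self hfs.ne', div_self hgs.ne', mul_one, mul_one, hab, mul_one]

namespace Matrix

theorem convex_setOf_isHermitian {n α : Type*} [AddCommMonoid α] [StarAddMonoid α] [Module ℝ α]
    [StarModule ℝ α] : Convex ℝ {X : Matrix n n α | X.IsHermitian} :=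
  fun _ hX _ hY a b _ _ _ => (hX.smul (IsSelfAdjoint.all a)).add (hY.smul (IsSelfAdjoint.all b))

variable {ι 𝕜 : Type*} [Fintype ι] [DecidableEq ι] [RCLike 𝕜]

theorem normSq_mem_doublyStochastic_of_mem_unitaryGroup {U : Matrix ι ι 𝕜}
    (hU : U ∈ unitaryGroup ι 𝕜) : (of fun i j => ‖U i j‖ ^ 2) ∈ doublyStochastic ℝ ι := by
  refine mem_doublyStochastic_iff_sum.2 ⟨fun i j => by simp, fun i => ?_, fun j => ?_⟩
  · have h := congr_fun₂ (mem_unitaryGroup_iff.1 hU) i i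
    simp only [mul_apply, star_apply, one_apply_eq, RCLike.star_def, RCLike.mul_conj] at h
    exact_mod_cast h
  · have h := congr_fun₂ (mem_unitaryGroup_iff'.1 hU) j j
    simp only [mul_apply, star_apply, one_apply_eq, RCLike.star_def, RCLike.conj_mul] at h
    exact_mod_cast h

theorem _root_.ConvexOn.sum_map_mulVec_le {s : Set ℝ} {f : ℝ → ℝ} (hf : ConvexOn ℝ s f)
    {M : Matrix ι ι ℝ} (hM : M ∈ doublyStochastic ℝ ι) {v : ι → ℝ} (hv : ∀ i, v i ∈ s) :
    ∑ i, f ((M *ᵥ v) i) ≤ ∑ i, f (v i) :=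
  calc ∑ i, f ((M *ᵥ v) i)
      ≤ ∑ i, ∑ j, M i j * f (v j) := Finset.sum_le_sum fun i _ =>
        hf.map_sum_le (fun j _ => nonneg_of_mem_doublyStochastic hM)
          (sum_row_of_mem_doublyStochastic hM i) (fun j _ => hv j)
    _ = ∑ j, f (v j) := by
        rw [Finset.sum_comm]
        simp only [← Finset.sum_mul, sum_col_of_mem_doublyStochastic hM, one_mul]

theorem re_mul_diagonal_mul_conjTranspose_apply_self (C : Matrix ι ι 𝕜) (d : ι → ℝ) (i : ι) :
    RCLike.re ((C * diagonal (RCLike.ofReal ∘ d : ι → 𝕜) * Cᴴ) i i) =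
      ((of fun i j => ‖C i j‖ ^ 2) *ᵥ d) i := by
  simp only [mul_apply (M := C * _), mul_diagonal, conjTranspose_apply, Function.comp_apply,
    RCLike.star_def, mul_right_comm _ _ (starRingEnd 𝕜 _), RCLike.mul_conj, map_sum, mulVec,
    dotProduct, of_apply]
  norm_cast

theorem IsHermitian.re_diag_conj_eq_mulVec_eigenvalues {X : Matrix ι ι 𝕜} (hX : X.IsHermitian)
    (U : Matrix ι ι 𝕜) (i : ι) :
    RCLike.re ((Uᴴ * X * U) i i) =
      ((of fun i j => ‖(Uᴴ * hX.eigenvectorUnitary) i j‖ ^ 2) *ᵥ hX.eigenvalues) i := by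
  rw [← re_mul_diagonal_mul_conjTranspose_apply_self]
  conv_lhs => rw [hX.spectral_theorem]
  simp only [Unitary.conjStarAlgAut_apply, conjTranspose_mul, conjTranspose_conjTranspose,
    star_eq_conjTranspose, Matrix.mul_assoc]

theorem IsHermitian.re_diag_conj_eigenvectorUnitary {X : Matrix ι ι 𝕜} (hX : X.IsHermitian)
    (i : ι) :
    RCLike.re (((hX.eigenvectorUnitary : Matrix ι ι 𝕜)ᴴ * X * hX.eigenvectorUnitary) i i) =
      hX.eigenvalues i := by
  have h := congr_fun₂ hX.conjStarAlgAut_star_eigenvectorUnitary i i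
  simp only [Unitary.conjStarAlgAut_apply, Unitary.coe_star, star_star] at h
  simp [← star_eq_conjTranspose, h]

theorem IsHermitian.sum_map_re_diag_conj_le {X : Matrix ι ι 𝕜} (hX : X.IsHermitian) {s : Set ℝ}
    {f : ℝ → ℝ} (hf : ConvexOn ℝ s f) (hs : ∀ i, hX.eigenvalues i ∈ s) {U : Matrix ι ι 𝕜}
    (hU : U ∈ unitaryGroup ι 𝕜) :
    ∑ i, f (RCLike.re ((Uᴴ * X * U) i i)) ≤ ∑ i, f (hX.eigenvalues i) := by
  simp only [hX.re_diag_conj_eq_mulVec_eigenvalues U]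
  exact hf.sum_map_mulVec_le (normSq_mem_doublyStochastic_of_mem_unitaryGroup
    (mul_mem (Unitary.star_mem hU) hX.eigenvectorUnitary.2)) hs

theorem IsHermitian.trace_exp {X : Matrix ι ι 𝕜} (hX : X.IsHermitian) :
    (NormedSpace.exp X).trace = ∑ i, (Real.exp (hX.eigenvalues i) : 𝕜) := by
  have hconj := exp_units_conj (Unitary.toUnits hX.eigenvectorUnitary)
    (diagonal (RCLike.ofReal ∘ hX.eigenvalues))
  simp only [Unitary.val_toUnits_apply, Unitary.val_inv_toUnits_apply, UnitaryGroup.inv_val]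
    at hconj
  conv_lhs => rw [hX.spectral_theorem, Unitary.conjStarAlgAut_apply, hconj, trace_mul_cycle,
    Unitary.coe_star_mul_self, Matrix.one_mul, exp_diagonal, trace_diagonal]
  refine Finset.sum_congr rfl fun i _ => ?_
  simp [← NormedSpace.algebraMap_exp_comm, Real.exp_eq_exp_ℝ]

theorem IsHermitian.re_trace_exp {X : Matrix ι ι 𝕜} (hX : X.IsHermitian) :
    RCLike.re (NormedSpace.exp X).trace = ∑ i, Real.exp (hX.eigenvalues i) := by
  simp [hX.trace_exp]

theorem IsHermitian.re_trace_exp_pos [Nonempty ι] {X : Matrix ι ι 𝕜} (hX : X.IsHermitian) :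
    0 < RCLike.re (NormedSpace.exp X).trace := by
  rw [hX.re_trace_exp]
  exact Finset.sum_pos (fun i _ => Real.exp_pos _) Finset.univ_nonempty

theorem IsHermitian.re_trace_exp_smul_add_smul_le [Nonempty ι] {X Y : Matrix ι ι 𝕜}
    (hX : X.IsHermitian) (hY : Y.IsHermitian) {a b : ℝ} (ha : 0 ≤ a) (hb : 0 ≤ b)
    (hab : a + b = 1) :
    RCLike.re (NormedSpace.exp (a • X + b • Y)).trace ≤
      RCLike.re (NormedSpace.exp X).trace ^ a * RCLike.re (NormedSpace.exp Y).trace ^ b := by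
  have hZ : (a • X + b • Y).IsHermitian := convex_setOf_isHermitian hX hY ha hb hab
  set W : Matrix ι ι 𝕜 := (hZ.eigenvectorUnitary : Matrix ι ι 𝕜)
  set α : ι → ℝ := fun i => RCLike.re ((Wᴴ * X * W) i i)
  set β : ι → ℝ := fun i => RCLike.re ((Wᴴ * Y * W) i i)
  have hsplit (i : ι) : hZ.eigenvalues i = a * α i + b * β i := by
    rw [← hZ.re_diag_conj_eigenvectorUnitary]
    simp [α, β, W, Matrix.mul_add, Matrix.add_mul, RCLike.smul_re]
  have hpeierls {V : Matrix ι ι 𝕜} (hV : V.IsHermitian) :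
      ∑ i, Real.exp (RCLike.re ((Wᴴ * V * W) i i)) ≤ RCLike.re (NormedSpace.exp V).trace := by
    rw [hV.re_trace_exp]
    exact hV.sum_map_re_diag_conj_le convexOn_exp (fun _ => Set.mem_univ _)
      hZ.eigenvectorUnitary.2
  calc RCLike.re (NormedSpace.exp (a • X + b • Y)).trace
      = ∑ i, Real.exp (α i) ^ a * Real.exp (β i) ^ b := by
        simp only [hZ.re_trace_exp, hsplit, Real.exp_add, ← Real.exp_mul, mul_comm a, mul_comm b]
    _ ≤ (∑ i, Real.exp (α i)) ^ a * (∑ i, Real.exp (β i)) ^ b :=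
        Real.sum_rpow_mul_rpow_le_of_add_eq_one _ (fun i _ => (Real.exp_pos _).le)
          (fun i _ => (Real.exp_pos _).le)
          (Finset.sum_pos (fun i _ => Real.exp_pos _) Finset.univ_nonempty)
          (Finset.sum_pos (fun i _ => Real.exp_pos _) Finset.univ_nonempty) ha hb hab
    _ ≤ RCLike.re (NormedSpace.exp X).trace ^ a * RCLike.re (NormedSpace.exp Y).trace ^ b := by
        gcongr ?_ ^ _ * ?_ ^ _
        exacts [Real.rpow_nonneg hX.re_trace_exp_pos.le a, hpeierls hX, hpeierls hY]

theorem convexOn_log_re_trace_exp :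
    ConvexOn ℝ {X : Matrix ι ι 𝕜 | X.IsHermitian}
      (fun X => Real.log (RCLike.re (NormedSpace.exp X).trace)) := by
  refine ⟨convex_setOf_isHermitian, fun X hX Y hY a b ha hb hab => ?_⟩
  rcases isEmpty_or_nonempty ι with hι | hι
  · simp [trace]
  have hXpos := IsHermitian.re_trace_exp_pos hX
  have hYpos := IsHermitian.re_trace_exp_pos hY
  calc Real.log (RCLike.re (NormedSpace.exp (a • X + b • Y)).trace)
      ≤ Real.log (RCLike.re (NormedSpace.exp X).trace ^ a *
          RCLike.re (NormedSpace.exp Y).trace ^ b) :=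
        Real.log_le_log (convex_setOf_isHermitian hX hY ha hb hab).re_trace_exp_pos
          (IsHermitian.re_trace_exp_smul_add_smul_le hX hY ha hb hab)
    _ = a • Real.log (RCLike.re (NormedSpace.exp X).trace) +
          b • Real.log (RCLike.re (NormedSpace.exp Y).trace) := by
        rw [Real.log_mul (Real.rpow_pos_of_pos hXpos a).ne' (Real.rpow_pos_of_pos hYpos b).ne',
          Real.log_rpow hXpos, Real.log_rpow hYpos, smul_eq_mul, smul_eq_mul]

end Matrix

/-- For Hermitian matrices `A`, `B`, the function
`h ↦ log Tr exp(A + h B)` is convex on `ℝ`. (The trace of the exponential of a Hermitian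
matrix is a positive real; we take its real part.) -/
theorem log_trace_exp_convex {n : ℕ} (A B : Matrix (Fin n) (Fin n) ℂ)
    (hA : A.IsHermitian) (hB : B.IsHermitian) :
    ConvexOn ℝ Set.univ
      (fun h : ℝ => Real.log ((NormedSpace.exp (A + (h : ℂ) • B)).trace.re)) := by
  have hline (h : ℝ) : AffineMap.lineMap A (A + B) h = A + (h : ℂ) • B := by
    rw [AffineMap.lineMap_apply_module', add_sub_cancel_left, add_comm, Complex.coe_smul]
  have hherm (h : ℝ) : (A + (h : ℂ) • B).IsHermitian := hA.add (hB.smul (Complex.conj_ofReal h))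
  have hconv := convexOn_log_re_trace_exp.comp_affineMap (AffineMap.lineMap (k := ℝ) A (A + B))
  refine (hconv.subset (fun h _ => ?_) convex_univ).congr fun h _ => ?_
  · simpa [hline] using hherm h
  · simp [hline]
end

section
/- Let A, B be Hermitian n×n complex matrices. Then Tr e^{A+B} ≥ e^{Tr(B ρ_A)} Tr e^{A}, where ρ_A = e^A / Tr e^A; equivalently, log Tr e^{A+B} - log Tr e^{A} ≥ Tr(B e^A)/Tr e^A (the Peierls–Bogoliubov inequality). -/
/-!
Diagonalise `A = U diag(a) U*` and let `b` be the diagonal of `U* B U`, so that `a + b` is the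
diagonal of `U* (A + B) U`. Each diagonal entry of a Hermitian matrix is a convex combination of
its eigenvalues (with weights `|U i k|²`), so Jensen for `exp` gives Peierls' inequality
`∑ i, e^{a i + b i} ≤ Tr e^{A+B}`. Jensen once more, with the Gibbs weights `e^{a i} / ∑ j, e^{a j}`,
gives `e^{⟨b⟩} ∑ i, e^{a i} ≤ ∑ i, e^{a i + b i}`, where `⟨b⟩ = Tr (B e^A) / Tr e^A`.
-/

open Matrix

namespace Matrix

variable {ι : Type*} [Fintype ι] [DecidableEq ι]

lemma exp_unitary_conj (U : unitaryGroup ι ℂ) (M : Matrix ι ι ℂ) :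
    NormedSpace.exp ((U : Matrix ι ι ℂ) * M * star (U : Matrix ι ι ℂ)) =
      U * NormedSpace.exp M * star (U : Matrix ι ι ℂ) :=
  exp_units_conj (Unitary.toUnits U) M

lemma trace_exp_star_mul_mul (U : unitaryGroup ι ℂ) (M : Matrix ι ι ℂ) :
    (NormedSpace.exp (star (U : Matrix ι ι ℂ) * M * U)).trace = (NormedSpace.exp M).trace := by
  simpa [trace_mul_cycle] using congrArg trace (exp_unitary_conj (star U) M)

lemma sum_normSq_apply_right (U : unitaryGroup ι ℂ) (i : ι) :
    ∑ k, Complex.normSq (U i k) = 1 := by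
  have h := congrArg Complex.re (congrFun₂ (Unitary.coe_mul_star_self U) i i)
  simpa [mul_apply, Complex.re_sum, Complex.mul_conj] using h

lemma sum_normSq_apply_left (U : unitaryGroup ι ℂ) (k : ι) :
    ∑ i, Complex.normSq (U i k) = 1 := by
  simpa using sum_normSq_apply_right (star U) k

lemma re_unitary_conj_diagonal_apply_self (U : unitaryGroup ι ℂ) (d : ι → ℝ) (i : ι) :
    (((U : Matrix ι ι ℂ) * diagonal (fun k ↦ (d k : ℂ)) * star (U : Matrix ι ι ℂ)) i i).re
      = ∑ k, Complex.normSq (U i k) * d k := by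
  rw [mul_apply, Complex.re_sum]
  refine Finset.sum_congr rfl fun k _ ↦ ?_
  rw [mul_diagonal, star_apply, Complex.star_def, mul_right_comm, Complex.mul_conj,
    ← Complex.ofReal_mul, Complex.ofReal_re]

namespace IsHermitian

variable {M : Matrix ι ι ℂ} (hM : M.IsHermitian)
include hM

lemma re_apply_self_eq_sum (i : ι) :
    (M i i).re = ∑ k, Complex.normSq (hM.eigenvectorUnitary i k) * hM.eigenvalues k := by
  conv_lhs => rw [hM.spectral_theorem, Unitary.conjStarAlgAut_apply]
  exact re_unitary_conj_diagonal_apply_self _ _ i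

lemma sum_map_re_diag_le_sum_map_eigenvalues {f : ℝ → ℝ} (hf : ConvexOn ℝ Set.univ f) :
    ∑ i, f (M i i).re ≤ ∑ k, f (hM.eigenvalues k) := by
  set U := hM.eigenvectorUnitary
  calc ∑ i, f (M i i).re
      ≤ ∑ i, ∑ k, Complex.normSq (U i k) * f (hM.eigenvalues k) := by
        refine Finset.sum_le_sum fun i _ ↦ ?_
        rw [hM.re_apply_self_eq_sum]
        simpa only [smul_eq_mul] using hf.map_sum_le (fun _ _ ↦ Complex.normSq_nonneg _)
          (sum_normSq_apply_right U i) (fun _ _ ↦ Set.mem_univ _)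
    _ = ∑ k, f (hM.eigenvalues k) := by
        rw [Finset.sum_comm]
        simp only [← Finset.sum_mul, sum_normSq_apply_left, one_mul]

lemma exp_eq : NormedSpace.exp M = (hM.eigenvectorUnitary : Matrix ι ι ℂ) *
    diagonal (fun k ↦ (Real.exp (hM.eigenvalues k) : ℂ)) *
      star (hM.eigenvectorUnitary : Matrix ι ι ℂ) := by
  conv_lhs => rw [hM.spectral_theorem, Unitary.conjStarAlgAut_apply]
  rw [exp_unitary_conj, exp_diagonal]
  congr
  ext k
  simp [Complex.ofReal_exp, Complex.exp_eq_exp_ℂ]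

lemma re_trace_exp_s16 : (NormedSpace.exp M).trace.re = ∑ k, Real.exp (hM.eigenvalues k) := by
  rw [hM.exp_eq, trace_mul_cycle, UnitaryGroup.star_mul_self, Matrix.one_mul, trace_diagonal,
    Complex.re_sum]
  simp only [Complex.ofReal_re]

lemma re_trace_mul_exp (B : Matrix ι ι ℂ) :
    (B * NormedSpace.exp M).trace.re = ∑ k, ((star (hM.eigenvectorUnitary : Matrix ι ι ℂ) * B *
      hM.eigenvectorUnitary) k k).re * Real.exp (hM.eigenvalues k) := by
  rw [hM.exp_eq, ← Matrix.mul_assoc, ← Matrix.mul_assoc, trace_mul_cycle, ← Matrix.mul_assoc,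
    trace, Complex.re_sum]
  simp [mul_diagonal, Complex.exp_ofReal_re]

lemma sum_exp_re_diag_le_re_trace_exp :
    ∑ i, Real.exp (M i i).re ≤ (NormedSpace.exp M).trace.re :=
  hM.re_trace_exp_s16 ▸ hM.sum_map_re_diag_le_sum_map_eigenvalues convexOn_exp

lemma sum_exp_re_diag_unitary_conj_le_re_trace_exp (V : unitaryGroup ι ℂ) :
    ∑ i, Real.exp ((star (V : Matrix ι ι ℂ) * M * V) i i).re ≤ (NormedSpace.exp M).trace.re := by
  have hVMV : (star (V : Matrix ι ι ℂ) * M * V).IsHermitian := by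
    simpa [star_eq_conjTranspose] using isHermitian_conjTranspose_mul_mul (V : Matrix ι ι ℂ) hM
  simpa only [trace_exp_star_mul_mul] using hVMV.sum_exp_re_diag_le_re_trace_exp

lemma star_eigenvectorUnitary_mul_mul_self :
    star (hM.eigenvectorUnitary : Matrix ι ι ℂ) * M * (hM.eigenvectorUnitary : Matrix ι ι ℂ) =
      diagonal (RCLike.ofReal ∘ hM.eigenvalues) := by
  simpa using hM.conjStarAlgAut_star_eigenvectorUnitary

end IsHermitian

end Matrix

lemma Real.exp_div_sum_exp_mul_sum_exp_le_sum_exp_add {ι : Type*} (s : Finset ι) (a b : ι → ℝ) :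
    Real.exp ((∑ i ∈ s, b i * Real.exp (a i)) / ∑ i ∈ s, Real.exp (a i)) *
      ∑ i ∈ s, Real.exp (a i) ≤ ∑ i ∈ s, Real.exp (a i + b i) := by
  rcases s.eq_empty_or_nonempty with rfl | hs
  · simp
  set Z := ∑ i ∈ s, Real.exp (a i)
  have hZ : 0 < Z := Finset.sum_pos (fun i _ ↦ Real.exp_pos _) hs
  have hJensen := convexOn_exp.map_sum_le (t := s) (w := fun i ↦ Real.exp (a i) / Z) (p := b)
    (fun i _ ↦ by positivity) (by rw [← Finset.sum_div, div_self hZ.ne']) (fun _ _ ↦ trivial)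
  rw [← le_div_iff₀ hZ]
  simpa only [smul_eq_mul, Finset.sum_div, div_mul_eq_mul_div, mul_comm (Real.exp (a _)),
    Real.exp_add] using hJensen

lemma Real.le_log_sub_log_of_exp_mul_le {t z w : ℝ} (hz : 0 < z) (h : Real.exp t * z ≤ w) :
    t ≤ Real.log w - Real.log z := by
  have := Real.log_le_log (by positivity) h
  rw [Real.log_mul (Real.exp_ne_zero t) hz.ne', Real.log_exp] at this
  linarith

/-- The Peierls–Bogoliubov inequality: for Hermitian matrices `A`, `B`,
`Tr e^{A+B} ≥ e^{Tr(B ρ_A)} Tr e^A` where `ρ_A = e^A / Tr e^A`; equivalently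
`log Tr e^{A+B} - log Tr e^A ≥ Tr(B e^A) / Tr e^A`. -/
theorem peierls_bogoliubov {n : ℕ} (A B : Matrix (Fin n) (Fin n) ℂ)
    (hA : A.IsHermitian) (hB : B.IsHermitian) :
    (NormedSpace.exp (A + B)).trace.re ≥
        Real.exp ((B * NormedSpace.exp A).trace.re / (NormedSpace.exp A).trace.re) *
          (NormedSpace.exp A).trace.re ∧
      Real.log ((NormedSpace.exp (A + B)).trace.re) -
          Real.log ((NormedSpace.exp A).trace.re) ≥
        (B * NormedSpace.exp A).trace.re / (NormedSpace.exp A).trace.re := by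
  rcases isEmpty_or_nonempty (Fin n) with hn | hn
  · -- every trace vanishes, and `0 / 0 = 0 = Real.log 0`
    simp [Matrix.trace]
  set U : Matrix (Fin n) (Fin n) ℂ := (hA.eigenvectorUnitary : Matrix (Fin n) (Fin n) ℂ)
  set a := hA.eigenvalues
  set b : Fin n → ℝ := fun i ↦ ((star U * B * U) i i).re
  have hSum : ∑ i, Real.exp (a i + b i) ≤ (NormedSpace.exp (A + B)).trace.re := by
    have h := (hA.add hB).sum_exp_re_diag_unitary_conj_le_re_trace_exp hA.eigenvectorUnitary
    simpa [Matrix.mul_add, Matrix.add_mul, hA.star_eigenvectorUnitary_mul_mul_self] using h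
  have hGibbs := (Real.exp_div_sum_exp_mul_sum_exp_le_sum_exp_add Finset.univ a b).trans hSum
  rw [hA.re_trace_exp_s16, hA.re_trace_mul_exp]
  exact ⟨hGibbs, Real.le_log_sub_log_of_exp_mul_le
    (Finset.sum_pos (fun i _ ↦ Real.exp_pos _) Finset.univ_nonempty) hGibbs⟩
end
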